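/- Let G be a finite 2-group generated by a₁, a₂, a₃ subject (modulo G₃) to a₁² ≡ a₂² ≡ a₃² ≡ [a₂,a₃] ≡ 1 mod G₃, with G/G₂ ≅ (Z/2)³ and G₂/G₃ ≅ (Z/2)² (so G/G₃ is the group 32.033). Then the rank of the commutator subgroup G' is at most 3. -/

import Mathlib

/-!
Write `D = G'` and `Φ = Φ(D)`. As `D` is a 2-group, `Φ` contains every square and commutator of
`D`, so in `Q = G/Φ` the derived subgroup is elementary abelian, and by the Burnside basis theorem
it suffices to see that `[a₁,a₂]`, `[a₁,a₃]` and `[[a₁,a₂],a₃]` generate `Q'`.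

In `Q`, the factor `Qₙ₊₁/Qₙ₊₂` is generated by the commutators `[c, aᵢ]`, `c` running over
generators of `Qₙ/Qₙ₊₁`. Since `Q'` is elementary abelian, `[[x,y],y] = [x,y²]⁻¹`, which lies one
step deeper than `y²`; and `[[x,z],y] ≡ [[x,y],z]` as soon as `x` commutes with `[z,y]` modulo the
relevant term. With `aᵢ² ∈ Q₃` and `[a₂,a₃] ∈ Q₃` this gives `Q₂ = ⟨[a₁,a₂], [a₁,a₃]⟩Q₃`,
`Q₃ = ⟨[[a₁,a₂],a₃]⟩Q₄` and `Q₄ = Q₅`, hence `Q₄ = 1` by nilpotency.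
-/

/-- The commutator `[x,y] = x⁻¹y⁻¹xy`. -/
def commu {G : Type*} [Group G] (x y : G) : G := x⁻¹ * y⁻¹ * x * y

open Subgroup
open scoped commutatorElement

section Frattini

variable {P : Type*} [Group P]

theorem isSimpleGroup_quotient_of_isCoatom {M : Subgroup P} [M.Normal] (hM : IsCoatom M) :
    IsSimpleGroup (P ⧸ M) := by
  have e : Subgroup (P ⧸ M) ≃o Set.Ici M := QuotientGroup.comapMk'OrderIso M
  have : IsSimpleOrder (Subgroup (P ⧸ M)) :=
    e.isSimpleOrder_iff.mpr (Set.isSimpleOrder_Ici_iff_isCoatom.mpr hM)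
  have : Nontrivial (P ⧸ M) := Subgroup.nontrivial_iff.mp inferInstance
  exact ⟨fun H _ => eq_bot_or_eq_top H⟩

theorem IsCoatom.normal_of_isNilpotent [Group.IsNilpotent P] {M : Subgroup P} (hM : IsCoatom M) :
    M.Normal :=
  NormalizerCondition.normal_of_coatom M Group.normalizerCondition_of_isNilpotent hM

theorem commutatorElement_mem_frattini [Group.IsNilpotent P] (x y : P) :
    ⁅x, y⁆ ∈ frattini P := by
  refine mem_iInf.mpr fun M => mem_iInf.mpr fun (hM : IsCoatom M) => ?_
  have := hM.normal_of_isNilpotent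
  have := isSimpleGroup_quotient_of_isCoatom hM
  rw [← QuotientGroup.eq_one_iff, ← QuotientGroup.mk'_apply, map_commutatorElement,
    commutatorElement_eq_one_iff_mul_comm]
  exact IsSimpleGroup.comm_iff_isSolvable.mpr inferInstance _ _

theorem IsPGroup.pow_mem_frattini {p : ℕ} [Fact p.Prime] [Finite P] (hP : IsPGroup p P)
    (x : P) : x ^ p ∈ frattini P := by
  have := hP.isNilpotent
  refine mem_iInf.mpr fun M => mem_iInf.mpr fun (hM : IsCoatom M) => ?_
  have := hM.normal_of_isNilpotent
  have := isSimpleGroup_quotient_of_isCoatom hM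
  obtain ⟨n, hn⟩ := IsPGroup.iff_card.mp (hP.to_quotient M)
  have hprime : (Nat.card (P ⧸ M)).Prime := IsSimpleGroup.prime_card
  have hcard : Nat.card (P ⧸ M) = p := by
    rw [hn] at hprime ⊢
    rw [hprime.eq_one_of_pow, pow_one]
  rw [← QuotientGroup.eq_one_iff, QuotientGroup.mk_pow, ← hcard]
  exact pow_card_eq_one'

end Frattini


section LowerCentralSeries

variable {G : Type*} [Group G]

-- `γ n` is the paper's `G_{n+1}`: `γ 0 = G` and `γ 1 = G'`.
local notation "γ" => Subgroup.lowerCentralSeries (⊤ : Subgroup G)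

theorem commutatorElement_mem_lowerCentralSeries_succ_of_left {n : ℕ} {x : G} (hx : x ∈ γ n)
    (g : G) : ⁅x, g⁆ ∈ γ (n + 1) :=
  commutator_mem_commutator hx (mem_top g)

theorem commutatorElement_mem_lowerCentralSeries_succ_of_right {n : ℕ} {x : G} (hx : x ∈ γ n)
    (g : G) : ⁅g, x⁆ ∈ γ (n + 1) := by
  rw [← commutatorElement_inv]
  exact inv_mem (commutatorElement_mem_lowerCentralSeries_succ_of_left hx g)

theorem commutatorElement_mem_lowerCentralSeries_one (x y : G) : ⁅x, y⁆ ∈ γ 1 :=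
  commutatorElement_mem_lowerCentralSeries_succ_of_left (mem_top x) y

theorem normal_of_lowerCentralSeries_succ_le {H : Subgroup G} {n : ℕ} (hle : H ≤ γ n)
    (hsucc : γ (n + 1) ≤ H) : H.Normal :=
  commutator_top_right_le_iff.mp ((commutator_mono hle le_rfl).trans hsucc)

theorem commutator_closure_top_le {K : Subgroup G} [K.Normal] {X Y : Set G}
    (hX : closure X = ⊤) (h : ∀ y ∈ Y, ∀ x ∈ X, ⁅y, x⁆ ∈ K) : ⁅closure Y, ⊤⁆ ≤ K := by
  set π := QuotientGroup.mk' K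
  have hcomm : ∀ {y g : G}, ⁅y, g⁆ ∈ K ↔ π g * π y = π y * π g := by
    intro y g
    rw [← QuotientGroup.eq_one_iff, ← QuotientGroup.mk'_apply, map_commutatorElement,
      commutatorElement_eq_one_iff_mul_comm, eq_comm]
  have hcenter : closure Y ≤ (center (G ⧸ K)).comap π := by
    rw [closure_le, ← centralizer_univ, ← coe_top, ← map_top_of_surjective π
      (QuotientGroup.mk'_surjective K), ← hX, MonoidHom.map_closure, centralizer_closure]
    rintro y hy _ ⟨x, hx, rfl⟩
    exact hcomm.mp (h y hy x hx)
  exact commutator_le.mpr fun y hy g _ => hcomm.mpr ((mem_center_iff.mp (hcenter hy)) (π g))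

theorem lowerCentralSeries_succ_le_of_commutatorElement_mem {X C : Set G} {S : Subgroup G}
    [S.Normal] {n : ℕ} (hX : closure X = ⊤) (hC : γ n ≤ closure C ⊔ γ (n + 1))
    (hS : γ (n + 2) ≤ S) (h : ∀ c ∈ C, ∀ x ∈ X, ⁅c, x⁆ ∈ S) : γ (n + 1) ≤ S := by
  rw [← closure_eq (γ (n + 1)), ← Subgroup.closure_union] at hC
  refine (commutator_mono hC le_rfl).trans (commutator_closure_top_le hX ?_)
  rintro y (hy | hy) x hx
  · exact h y hy x hx
  · exact hS (commutatorElement_mem_lowerCentralSeries_succ_of_left hy x)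

theorem lowerCentralSeries_eq_bot_of_le_succ [Group.IsNilpotent G] {n : ℕ}
    (h : γ n ≤ γ (n + 1)) : γ n = ⊥ := by
  have hle : ∀ k, γ n ≤ γ (n + k) := by
    intro k
    induction k with
    | zero => rfl
    | succ k ih =>
      rw [← add_assoc]
      exact h.trans (commutator_mono ih le_rfl)
  obtain ⟨k, hk⟩ := Subgroup.nilpotent_iff_lowerCentralSeries.mp ‹_›
  exact le_bot_iff.mp
    ((hle k).trans (hk ▸ Subgroup.lowerCentralSeries_antitone _ (Nat.le_add_left k n)))

theorem commutatorElement_commutatorElement_right_comm {x y z : G}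
    (hcen : ∀ g, Commute ⁅⁅x, y⁆, z⁆ g) (hx : Commute x ⁅z, y⁆)
    (hw : Commute ⁅x, y * z⁆ ⁅z, y⁆) (hxy : Commute ⁅x, y⁆ ⁅x, z⁆) :
    ⁅⁅x, z⁆, y⁆ = ⁅⁅x, y⁆, z⁆ := by
  have hswap : ⁅x, z * y⁆ = ⁅x, y * z⁆ := by
    calc ⁅x, z * y⁆ = ⁅x, ⁅z, y⁆⁆ * (⁅z, y⁆ * ⁅x, y * z⁆ * ⁅z, y⁆⁻¹) := by group
      _ = ⁅x, y * z⁆ := by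
        rw [commutatorElement_eq_one_iff_commute.mpr hx, one_mul, hw.symm.eq, mul_inv_cancel_right]
  have hyz : ⁅x, y * z⁆ = ⁅x, y⁆ * ⁅⁅x, z⁆, y⁆⁻¹ * ⁅x, z⁆ := by group
  have hzy : ⁅x, z * y⁆ = ⁅x, y⁆ * ⁅⁅x, y⁆, z⁆⁻¹ * ⁅x, z⁆ := by
    calc ⁅x, z * y⁆ = ⁅x, z⁆ * ⁅⁅x, y⁆, z⁆⁻¹ * ⁅x, y⁆ := by group
      _ = ⁅⁅x, y⁆, z⁆⁻¹ * (⁅x, z⁆ * ⁅x, y⁆) := by rw [← mul_assoc, ((hcen _).inv_left).eq]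
      _ = ⁅x, y⁆ * ⁅⁅x, y⁆, z⁆⁻¹ * ⁅x, z⁆ := by
        rw [← hxy.eq, ← mul_assoc, ← ((hcen _).inv_left).eq]
  rw [hzy, hyz] at hswap
  exact inv_injective (mul_left_cancel (mul_right_cancel hswap)).symm

theorem commutatorElement_comm_of_sq_eq_one (hsq : ∀ x ∈ γ 1, x ^ 2 = 1) (x y : G) :
    ⁅x, y⁆ = ⁅y, x⁆ := by
  have h := hsq _ (commutatorElement_mem_lowerCentralSeries_one x y)
  rw [pow_two] at h
  rw [← commutatorElement_inv x y, inv_eq_of_mul_eq_one_right h]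

theorem commutatorElement_commutatorElement_self_right (hab : ∀ x ∈ γ 1, ∀ y ∈ γ 1, Commute x y)
    (hsq : ∀ x ∈ γ 1, x ^ 2 = 1) (x y : G) : ⁅⁅x, y⁆, y⁆ = ⁅x, y ^ 2⁆⁻¹ := by
  have hc := commutatorElement_mem_lowerCentralSeries_one x y
  have hcomm := (hab _ hc _ (commutatorElement_mem_lowerCentralSeries_one x (y ^ 2))).inv_right
  calc ⁅⁅x, y⁆, y⁆ = ⁅x, y⁆ ^ 2 * (⁅x, y⁆⁻¹ * (⁅x, y ^ 2⁆⁻¹ * ⁅x, y⁆)) := by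
        simp only [pow_two]; group
    _ = ⁅x, y ^ 2⁆⁻¹ := by rw [hsq _ hc, one_mul, ← hcomm.eq, inv_mul_cancel_left]

theorem commutatorElement_commutatorElement_self_left (hab : ∀ x ∈ γ 1, ∀ y ∈ γ 1, Commute x y)
    (hsq : ∀ x ∈ γ 1, x ^ 2 = 1) (x y : G) : ⁅⁅x, y⁆, x⁆ = ⁅y, x ^ 2⁆⁻¹ := by
  rw [commutatorElement_comm_of_sq_eq_one hsq x y,
    commutatorElement_commutatorElement_self_right hab hsq]

theorem commutatorElement_commutatorElement_right_comm_mem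
    (hab : ∀ x ∈ γ 1, ∀ y ∈ γ 1, Commute x y) {N : Subgroup G} [N.Normal] {x y z : G}
    (hcen : ∀ g, ⁅⁅⁅x, y⁆, z⁆, g⁆ ∈ N) (hx : ⁅x, ⁅z, y⁆⁆ ∈ N) :
    ⁅⁅x, z⁆, y⁆ * ⁅⁅x, y⁆, z⁆⁻¹ ∈ N := by
  set π := QuotientGroup.mk' N
  have hcomm : ∀ {a b : G}, ⁅a, b⁆ ∈ N → Commute (π a) (π b) := by
    intro a b h
    rw [← commutatorElement_eq_one_iff_commute, ← map_commutatorElement]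
    exact (QuotientGroup.eq_one_iff _).mpr h
  have hD : ∀ a b c d : G, Commute (π ⁅a, b⁆) (π ⁅c, d⁆) := fun a b c d =>
    (hab _ (commutatorElement_mem_lowerCentralSeries_one a b) _
      (commutatorElement_mem_lowerCentralSeries_one c d)).map π
  have key : ⁅⁅π x, π z⁆, π y⁆ = ⁅⁅π x, π y⁆, π z⁆ := by
    refine commutatorElement_commutatorElement_right_comm (fun g => ?_) ?_ ?_ ?_
    · obtain ⟨g, rfl⟩ := QuotientGroup.mk'_surjective N g
      simpa only [map_commutatorElement] using hcomm (hcen g)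
    · simpa only [map_commutatorElement] using hcomm hx
    · simpa only [map_commutatorElement, map_mul] using hD x (y * z) z y
    · simpa only [map_commutatorElement] using hD x y x z
  rw [← QuotientGroup.eq_one_iff, ← QuotientGroup.mk'_apply, map_mul, map_inv]
  simp only [map_commutatorElement]
  exact mul_inv_eq_one.mpr key

namespace Group32033

theorem lowerCentralSeries_one_le_closure_sup_two {b₁ b₂ b₃ : G}
    (hgen : closure {b₁, b₂, b₃} = ⊤) (h₂₃ : ⁅b₂, b₃⁆ ∈ γ 2) :
    γ 1 ≤ closure {⁅b₁, b₂⁆, ⁅b₁, b₃⁆} ⊔ γ 2 := by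
  set S := closure {⁅b₁, b₂⁆, ⁅b₁, b₃⁆} ⊔ γ 2
  have : S.Normal := normal_of_lowerCentralSeries_succ_le (n := 1)
    (sup_le ((closure_le _).mpr (Set.pair_subset (commutatorElement_mem_lowerCentralSeries_one _ _)
      (commutatorElement_mem_lowerCentralSeries_one _ _)))
      (Subgroup.lowerCentralSeries_antitone _ (by norm_num)))
    le_sup_right
  have h₁₂ : ⁅b₁, b₂⁆ ∈ S := mem_sup_left (subset_closure (by simp))
  have h₁₃ : ⁅b₁, b₃⁆ ∈ S := mem_sup_left (subset_closure (by simp))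
  have h₂₃' : ⁅b₂, b₃⁆ ∈ S := mem_sup_right h₂₃
  have hself (x : G) : ⁅x, x⁆ ∈ S := commutatorElement_self x ▸ one_mem S
  have hswap {x y : G} (h : ⁅x, y⁆ ∈ S) : ⁅y, x⁆ ∈ S := commutatorElement_inv x y ▸ inv_mem h
  refine lowerCentralSeries_succ_le_of_commutatorElement_mem (n := 0) hgen
    (by rw [hgen]; exact le_sup_left) le_sup_right ?_
  simp only [Set.mem_insert_iff, Set.mem_singleton_iff, forall_eq_or_imp, forall_eq]
  exact ⟨⟨hself _, h₁₂, h₁₃⟩, ⟨hswap h₁₂, hself _, h₂₃'⟩, hswap h₁₃, hswap h₂₃', hself _⟩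

theorem commutatorElement_commutatorElement_self_left_mem
    (hab : ∀ x ∈ γ 1, ∀ y ∈ γ 1, Commute x y) (hsq : ∀ x ∈ γ 1, x ^ 2 = 1) {n : ℕ} {x : G}
    (hx : x ^ 2 ∈ γ n) (y : G) : ⁅⁅x, y⁆, x⁆ ∈ γ (n + 1) := by
  rw [commutatorElement_commutatorElement_self_left hab hsq]
  exact inv_mem (commutatorElement_mem_lowerCentralSeries_succ_of_right hx y)

theorem commutatorElement_commutatorElement_self_right_mem
    (hab : ∀ x ∈ γ 1, ∀ y ∈ γ 1, Commute x y) (hsq : ∀ x ∈ γ 1, x ^ 2 = 1) {n : ℕ} {y : G}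
    (hy : y ^ 2 ∈ γ n) (x : G) : ⁅⁅x, y⁆, y⁆ ∈ γ (n + 1) := by
  rw [commutatorElement_commutatorElement_self_right hab hsq]
  exact inv_mem (commutatorElement_mem_lowerCentralSeries_succ_of_right hy x)

theorem lowerCentralSeries_two_le_closure_sup_three
    (hab : ∀ x ∈ γ 1, ∀ y ∈ γ 1, Commute x y) (hsq : ∀ x ∈ γ 1, x ^ 2 = 1) {b₁ b₂ b₃ : G}
    (hgen : closure {b₁, b₂, b₃} = ⊤) (hb₁ : b₁ ^ 2 ∈ γ 2) (hb₂ : b₂ ^ 2 ∈ γ 2)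
    (hb₃ : b₃ ^ 2 ∈ γ 2) (h₂₃ : ⁅b₂, b₃⁆ ∈ γ 2) :
    γ 2 ≤ closure {⁅⁅b₁, b₂⁆, b₃⁆} ⊔ γ 3 := by
  set S := closure {⁅⁅b₁, b₂⁆, b₃⁆} ⊔ γ 3
  have hu₂ : ⁅⁅b₁, b₂⁆, b₃⁆ ∈ γ 2 :=
    commutatorElement_mem_lowerCentralSeries_succ_of_left
      (commutatorElement_mem_lowerCentralSeries_one b₁ b₂) b₃
  have hu : ⁅⁅b₁, b₂⁆, b₃⁆ ∈ S := mem_sup_left (subset_closure rfl)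
  have hγ : ∀ {g : G}, g ∈ γ 3 → g ∈ S := fun h => mem_sup_right h
  have : S.Normal := normal_of_lowerCentralSeries_succ_le (n := 2)
    (sup_le ((closure_le _).mpr (Set.singleton_subset_iff.mpr hu₂))
      (Subgroup.lowerCentralSeries_antitone _ (by norm_num))) le_sup_right
  refine lowerCentralSeries_succ_le_of_commutatorElement_mem (n := 1) hgen
    (lowerCentralSeries_one_le_closure_sup_two hgen h₂₃) le_sup_right ?_
  simp only [Set.mem_insert_iff, Set.mem_singleton_iff, forall_eq_or_imp, forall_eq]
  refine ⟨⟨?_, ?_, hu⟩, ?_, ?_, ?_⟩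
  · exact hγ (commutatorElement_commutatorElement_self_left_mem hab hsq hb₁ b₂)
  · exact hγ (commutatorElement_commutatorElement_self_right_mem hab hsq hb₂ b₁)
  · exact hγ (commutatorElement_commutatorElement_self_left_mem hab hsq hb₁ b₃)
  · have hjacobi := commutatorElement_commutatorElement_right_comm_mem hab (N := γ 3)
      (fun g => commutatorElement_mem_lowerCentralSeries_succ_of_left hu₂ g)
      (commutatorElement_mem_lowerCentralSeries_succ_of_right
        (commutatorElement_inv b₂ b₃ ▸ inv_mem h₂₃) b₁)
    rw [← inv_mul_cancel_right ⁅⁅b₁, b₃⁆, b₂⁆ ⁅⁅b₁, b₂⁆, b₃⁆]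
    exact mul_mem (hγ hjacobi) hu
  · exact hγ (commutatorElement_commutatorElement_self_right_mem hab hsq hb₃ b₁)

theorem lowerCentralSeries_three_le_four
    (hab : ∀ x ∈ γ 1, ∀ y ∈ γ 1, Commute x y) (hsq : ∀ x ∈ γ 1, x ^ 2 = 1) {b₁ b₂ b₃ : G}
    (hgen : closure {b₁, b₂, b₃} = ⊤) (hb₁ : b₁ ^ 2 ∈ γ 2) (hb₂ : b₂ ^ 2 ∈ γ 2)
    (hb₃ : b₃ ^ 2 ∈ γ 2) (h₂₃ : ⁅b₂, b₃⁆ ∈ γ 2) :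
    γ 3 ≤ γ 4 := by
  have hc : ⁅b₁, b₂⁆ ∈ γ 1 := commutatorElement_mem_lowerCentralSeries_one b₁ b₂
  have hD : ∀ {g}, g ∈ γ 1 → ⁅⁅b₁, b₂⁆, g⁆ = 1 := fun hg =>
    commutatorElement_eq_one_iff_commute.mpr (hab _ hc _ hg)
  have hswap : ∀ y, ⁅⁅b₁, b₂⁆, y⁆ ∈ γ 3 → ⁅⁅⁅b₁, b₂⁆, b₃⁆, y⁆ ∈ γ 4 := by
    intro y hy
    have hy' : ⁅⁅⁅b₁, b₂⁆, y⁆, b₃⁆ ∈ γ 4 :=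
      commutatorElement_mem_lowerCentralSeries_succ_of_left hy b₃
    have hjacobi := commutatorElement_commutatorElement_right_comm_mem hab (N := γ 4)
      (fun g => commutatorElement_mem_lowerCentralSeries_succ_of_left
        (Subgroup.lowerCentralSeries_antitone _ (by norm_num) hy') g)
      (hD (commutatorElement_mem_lowerCentralSeries_one b₃ y) ▸ one_mem _)
    rw [← inv_mul_cancel_right ⁅⁅⁅b₁, b₂⁆, b₃⁆, y⁆ ⁅⁅⁅b₁, b₂⁆, y⁆, b₃⁆]
    exact mul_mem hjacobi hy'
  refine lowerCentralSeries_succ_le_of_commutatorElement_mem (n := 2) hgen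
    (lowerCentralSeries_two_le_closure_sup_three hab hsq hgen hb₁ hb₂ hb₃ h₂₃) le_rfl ?_
  simp only [Set.mem_insert_iff, Set.mem_singleton_iff, forall_eq_or_imp, forall_eq]
  refine ⟨hswap _ (commutatorElement_commutatorElement_self_left_mem hab hsq hb₁ b₂),
    hswap _ (commutatorElement_commutatorElement_self_right_mem hab hsq hb₂ b₁), ?_⟩
  rw [commutatorElement_commutatorElement_self_right hab hsq,
    hD (Subgroup.lowerCentralSeries_antitone _ (by norm_num) hb₃), inv_one]
  exact one_mem _

theorem lowerCentralSeries_one_le_closure [Group.IsNilpotent G]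
    (hab : ∀ x ∈ γ 1, ∀ y ∈ γ 1, Commute x y) (hsq : ∀ x ∈ γ 1, x ^ 2 = 1) {b₁ b₂ b₃ : G}
    (hgen : closure {b₁, b₂, b₃} = ⊤) (hb₁ : b₁ ^ 2 ∈ γ 2) (hb₂ : b₂ ^ 2 ∈ γ 2)
    (hb₃ : b₃ ^ 2 ∈ γ 2) (h₂₃ : ⁅b₂, b₃⁆ ∈ γ 2) :
    γ 1 ≤ closure {⁅b₁, b₂⁆, ⁅b₁, b₃⁆, ⁅⁅b₁, b₂⁆, b₃⁆} := by
  have h₃ : γ 3 = ⊥ :=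
    lowerCentralSeries_eq_bot_of_le_succ
      (lowerCentralSeries_three_le_four hab hsq hgen hb₁ hb₂ hb₃ h₂₃)
  have h₂ := lowerCentralSeries_two_le_closure_sup_three hab hsq hgen hb₁ hb₂ hb₃ h₂₃
  rw [h₃, sup_bot_eq] at h₂
  calc γ 1 ≤ closure {⁅b₁, b₂⁆, ⁅b₁, b₃⁆} ⊔ γ 2 :=
        lowerCentralSeries_one_le_closure_sup_two hgen h₂₃
    _ ≤ closure {⁅b₁, b₂⁆, ⁅b₁, b₃⁆} ⊔ closure {⁅⁅b₁, b₂⁆, b₃⁆} := sup_le_sup_left h₂ _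
    _ = closure {⁅b₁, b₂⁆, ⁅b₁, b₃⁆, ⁅⁅b₁, b₂⁆, b₃⁆} := by
      rw [← Subgroup.closure_union, Set.insert_union, Set.singleton_union]

theorem lowerCentralSeries_one_le_closure_sup [Group.IsNilpotent G] {N : Subgroup G} [N.Normal]
    (hsq : ∀ x ∈ γ 1, x ^ 2 ∈ N) (hcomm : ∀ x ∈ γ 1, ∀ y ∈ γ 1, ⁅x, y⁆ ∈ N) {a₁ a₂ a₃ : G}
    (hgen : closure {a₁, a₂, a₃} = ⊤) (ha₁ : a₁ ^ 2 ∈ γ 2) (ha₂ : a₂ ^ 2 ∈ γ 2)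
    (ha₃ : a₃ ^ 2 ∈ γ 2) (h₂₃ : ⁅a₂, a₃⁆ ∈ γ 2) :
    γ 1 ≤ closure {⁅a₁, a₂⁆, ⁅a₁, a₃⁆, ⁅⁅a₁, a₂⁆, a₃⁆} ⊔ N := by
  set π := QuotientGroup.mk' N
  have hπ : Function.Surjective π := QuotientGroup.mk'_surjective N
  have hγ (n : ℕ) : (⊤ : Subgroup (G ⧸ N)).lowerCentralSeries n = (γ n).map π := by
    rw [Subgroup.map_lowerCentralSeries, map_top_of_surjective π hπ]
  have hmem {n : ℕ} {g : G} (hg : g ∈ γ n) : π g ∈ (⊤ : Subgroup (G ⧸ N)).lowerCentralSeries n :=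
    hγ n ▸ mem_map_of_mem π hg
  have hker {g : G} (hg : g ∈ N) : π g = 1 := (QuotientGroup.eq_one_iff g).mpr hg
  have himage (x y z : G) : closure {π x, π y, π z} = (closure {x, y, z}).map π := by
    rw [MonoidHom.map_closure, Set.image_insert_eq, Set.image_insert_eq, Set.image_singleton]
  have key := lowerCentralSeries_one_le_closure (G := G ⧸ N) (b₁ := π a₁) (b₂ := π a₂)
    (b₃ := π a₃) ?_ ?_ ?_ (map_pow π a₁ 2 ▸ hmem ha₁) (map_pow π a₂ 2 ▸ hmem ha₂)
    (map_pow π a₃ 2 ▸ hmem ha₃) (map_commutatorElement π a₂ a₃ ▸ hmem h₂₃)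
  · intro x hx
    have hx' := key (hmem hx)
    simp only [← map_commutatorElement, himage] at hx'
    rw [sup_comm, ← QuotientGroup.comap_map_mk']
    exact hx'
  · rintro _ hx _ hy
    rw [hγ] at hx hy
    obtain ⟨x, hx, rfl⟩ := hx
    obtain ⟨y, hy, rfl⟩ := hy
    rw [← commutatorElement_eq_one_iff_commute, ← map_commutatorElement]
    exact hker (hcomm x hx y hy)
  · rintro _ hx
    rw [hγ] at hx
    obtain ⟨x, hx, rfl⟩ := hx
    rw [← map_pow]
    exact hker (hsq x hx)
  · rw [himage, hgen, map_top_of_surjective π hπ]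

end Group32033

end LowerCentralSeries

theorem rank_derived_le_three_general {G : Type*} [Group G] [Finite G]
    (hG : IsPGroup 2 G) (a₁ a₂ a₃ : G)
    (hgen : Subgroup.closure {a₁, a₂, a₃} = ⊤)
    (ha₁ : a₁ ^ 2 ∈ (⊤ : Subgroup G).lowerCentralSeries 2)
    (ha₂ : a₂ ^ 2 ∈ (⊤ : Subgroup G).lowerCentralSeries 2)
    (ha₃ : a₃ ^ 2 ∈ (⊤ : Subgroup G).lowerCentralSeries 2)
    (hc : commu a₂ a₃ ∈ (⊤ : Subgroup G).lowerCentralSeries 2) :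
    ∃ s : Finset ((⊤ : Subgroup G).lowerCentralSeries 1 : Subgroup G), s.card ≤ 3 ∧
      Subgroup.closure (s : Set ((⊤ : Subgroup G).lowerCentralSeries 1 : Subgroup G)) = ⊤ := by
  classical
  have : Fact (Nat.Prime 2) := ⟨Nat.prime_two⟩
  have := hG.isNilpotent
  set D := (⊤ : Subgroup G).lowerCentralSeries 1
  have h₂₃ : ⁅a₂, a₃⁆ ∈ (⊤ : Subgroup G).lowerCentralSeries 2 := by
    have h : ⁅a₂, a₃⁆ = a₂ * a₃ * commu a₂ a₃ * (a₂ * a₃)⁻¹ := by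
      simp only [commu, commutatorElement_def]; group
    exact h ▸ Normal.conj_mem inferInstance _ hc _
  have hcover := Group32033.lowerCentralSeries_one_le_closure_sup (N := (frattini D).map D.subtype)
    (fun x hx => ⟨⟨x, hx⟩ ^ 2, (hG.to_subgroup D).pow_mem_frattini _, rfl⟩)
    (fun x hx y hy => ⟨⁅⟨x, hx⟩, ⟨y, hy⟩⁆, commutatorElement_mem_frattini _ _, rfl⟩)
    hgen ha₁ ha₂ ha₃ h₂₃
  refine ⟨{(⟨_, commutatorElement_mem_lowerCentralSeries_one a₁ a₂⟩ : D),
    ⟨_, commutatorElement_mem_lowerCentralSeries_one a₁ a₃⟩,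
    ⟨_, Subgroup.lowerCentralSeries_antitone _ (by norm_num)
      (commutatorElement_mem_lowerCentralSeries_succ_of_left
        (commutatorElement_mem_lowerCentralSeries_one a₁ a₂) a₃)⟩}, Finset.card_le_three,
    frattini_nongenerating (eq_top_iff.mpr fun x _ => ?_)⟩
  rw [← mem_map_iff_mem D.subtype_injective, Subgroup.map_sup, MonoidHom.map_closure,
    Subgroup.coe_subtype]
  convert hcover x.2 using 3
  simp [Set.image_insert_eq]

/-- If `G/G₃` is the group 32.033, then the commutator subgroup of `G` has rank at most 3. -/
theorem rank_derived_le_three {G : Type*} [Group G] [Finite G]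
    (hG : IsPGroup 2 G) (a₁ a₂ a₃ : G)
    (hgen : Subgroup.closure {a₁, a₂, a₃} = ⊤)
    (h1 : Nonempty ((G ⧸ (⊤ : Subgroup G).lowerCentralSeries 1) ≃*
      Multiplicative (ZMod 2 × ZMod 2 × ZMod 2)))
    (h2 : Nonempty (((⊤ : Subgroup G).lowerCentralSeries 1 ⧸
      ((⊤ : Subgroup G).lowerCentralSeries 2).subgroupOf ((⊤ : Subgroup G).lowerCentralSeries 1)) ≃*
      Multiplicative (ZMod 2 × ZMod 2)))
    (ha₁ : a₁ ^ 2 ∈ (⊤ : Subgroup G).lowerCentralSeries 2)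
    (ha₂ : a₂ ^ 2 ∈ (⊤ : Subgroup G).lowerCentralSeries 2)
    (ha₃ : a₃ ^ 2 ∈ (⊤ : Subgroup G).lowerCentralSeries 2)
    (hc : commu a₂ a₃ ∈ (⊤ : Subgroup G).lowerCentralSeries 2) :
    ∃ s : Finset ((⊤ : Subgroup G).lowerCentralSeries 1 : Subgroup G), s.card ≤ 3 ∧
      Subgroup.closure (s : Set ((⊤ : Subgroup G).lowerCentralSeries 1 : Subgroup G)) = ⊤ :=
  rank_derived_le_three_general hG a₁ a₂ a₃ hgen ha₁ ha₂ ha₃ hc
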